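/- arXiv:1408.1374 — 2 statements merged into one kernel-verified Lean document; each statement's English description precedes it below -/
import Mathlib

section
/- Let p be a prime, z ∈ ℤ_p, and let k, l ≥ 0 be integers. Then the Haar volume of the set {x ∈ ℤ_p : p^k divides x(x − p^l) − z} is at most 2 · p^{−⌈k/2⌉}. -/
open MeasureTheory
open scoped ENNReal

/-- The Borel σ-algebra on the `p`-adic integers. -/
noncomputable instance padicMeasurableSpace (p : ℕ) [Fact p.Prime] :
    MeasurableSpace ℤ_[p] := borel _

instance padicBorelSpace (p : ℕ) [Fact p.Prime] : BorelSpace ℤ_[p] := ⟨rfl⟩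

/-- The Haar measure on `ℤ_p`, normalized so that `vol (ℤ_p) = 1`. -/
noncomputable def padicHaar (p : ℕ) [Fact p.Prime] : Measure ℤ_[p] :=
  Measure.addHaarMeasure
    ⟨⟨Set.univ, isCompact_univ⟩, by rw [interior_univ]; exact Set.univ_nonempty⟩

/-!
If `x₀` is one solution, then `x (x - c) - x₀ (x₀ - c) = (x - x₀) (x - (c - x₀))` with `c = p^l`,
and since `p^k` divides this product, `p^⌈k/2⌉` divides one of the two factors. Hence the solution
set lies in two cosets of `p^⌈k/2⌉ ℤ_p`. The ideal `p^m ℤ_p` is the kernel of `ℤ_p → ℤ/p^m`, so it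
has index `p^m`, and each of its cosets has Haar measure `p^{-m}`.
-/

theorem Prime.pow_dvd_or_pow_dvd_of_pow_dvd_mul {α : Type*} [CommMonoidWithZero α]
    [IsCancelMulZero α] {q a b : α} (hq : Prime q) {k : ℕ} (h : q ^ k ∣ a * b) :
    q ^ ((k + 1) / 2) ∣ a ∨ q ^ ((k + 1) / 2) ∣ b := by
  simp only [pow_dvd_iff_le_emultiplicity, emultiplicity_mul hq] at h ⊢
  by_contra! hlt
  obtain ⟨ha, hb⟩ := hlt
  lift emultiplicity q a to ℕ using ha.ne_top with u
  lift emultiplicity q b to ℕ using hb.ne_top with v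
  norm_cast at h ha hb
  omega

theorem setOf_pow_dvd_mul_sub_sub_subset_union {R : Type*} [CommRing R] [IsDomain R] {q : R}
    (hq : Prime q) {k : ℕ} {c z x₀ : R} (hx₀ : q ^ k ∣ x₀ * (x₀ - c) - z) :
    {x | q ^ k ∣ x * (x - c) - z} ⊆
      {x | q ^ ((k + 1) / 2) ∣ x - x₀} ∪ {x | q ^ ((k + 1) / 2) ∣ x - (c - x₀)} := by
  intro x hx
  have hfactor : x * (x - c) - z - (x₀ * (x₀ - c) - z) = (x - x₀) * (x - (c - x₀)) := by ring
  exact hq.pow_dvd_or_pow_dvd_of_pow_dvd_mul (hfactor ▸ dvd_sub hx hx₀)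

namespace PadicInt

variable {p : ℕ} [Fact p.Prime]

lemma coe_ker_toZModPow (m : ℕ) :
    ((toZModPow (p := p) m).toAddMonoidHom.ker : Set ℤ_[p]) = {x | (p : ℤ_[p]) ^ m ∣ x} := by
  ext x
  simp [← Ideal.mem_span_singleton, ← ker_toZModPow]

lemma index_ker_toZModPow (m : ℕ) : (toZModPow (p := p) m).toAddMonoidHom.ker.index = p ^ m := by
  rw [AddSubgroup.index_ker, AddMonoidHom.range_eq_top.2 (ZMod.ringHom_surjective _)]
  simp

lemma measurableSet_setOf_pow_dvd (m : ℕ) : MeasurableSet {x : ℤ_[p] | (p : ℤ_[p]) ^ m ∣ x} := by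
  have : {x : ℤ_[p] | (p : ℤ_[p]) ^ m ∣ x} = Metric.closedBall 0 ((p : ℝ) ^ (-(m : ℤ))) := by
    ext x
    rw [Set.mem_ofPred_eq, Metric.mem_closedBall, dist_zero_right,
      norm_le_pow_iff_mem_span_pow, Ideal.mem_span_singleton]
  exact this ▸ measurableSet_closedBall

lemma measure_setOf_pow_dvd_sub (μ : Measure ℤ_[p]) [μ.IsAddLeftInvariant]
    [IsProbabilityMeasure μ] (m : ℕ) (c : ℤ_[p]) :
    μ {x | (p : ℤ_[p]) ^ m ∣ x - c} = ((p : ℝ≥0∞) ^ m)⁻¹ := by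
  have htranslate : {x | (p : ℤ_[p]) ^ m ∣ x - c} = (-c + ·) ⁻¹' {x | (p : ℤ_[p]) ^ m ∣ x} := by
    ext x; simp [neg_add_eq_sub]
  set H := (toZModPow (p := p) m).toAddMonoidHom.ker
  have : H.FiniteIndex :=
    ⟨by rw [index_ker_toZModPow]; exact pow_ne_zero _ (Fact.out : p.Prime).ne_zero⟩
  have hH := H.index_mul_measure (by rw [coe_ker_toZModPow]; exact measurableSet_setOf_pow_dvd m) μ
  rw [index_ker_toZModPow, coe_ker_toZModPow, measure_univ, Nat.cast_pow, mul_comm] at hH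
  rw [htranslate, measure_preimage_add, ENNReal.eq_inv_of_mul_eq_one_left hH]

end PadicInt

instance padicHaar_isAddLeftInvariant (p : ℕ) [Fact p.Prime] :
    (padicHaar p).IsAddLeftInvariant := by
  unfold padicHaar; infer_instance

instance padicHaar_isProbabilityMeasure (p : ℕ) [Fact p.Prime] :
    IsProbabilityMeasure (padicHaar p) :=
  ⟨Measure.addHaarMeasure_self⟩

/-- For a prime `p`, `z ∈ ℤ_p` and integers `k, l ≥ 0`, the Haar volume of the set of
`x ∈ ℤ_p` with `p^k ∣ x*(x - p^l) - z` is at most `2 p^{-⌈k/2⌉}`.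
(Here `⌈k/2⌉ = (k+1)/2` with natural number division.) -/
theorem stmt15 (p : ℕ) [Fact p.Prime] (z : ℤ_[p]) (k l : ℕ) :
    padicHaar p {x : ℤ_[p] | (p : ℤ_[p]) ^ k ∣ x * (x - (p : ℤ_[p]) ^ l) - z}
      ≤ 2 * ((p : ℝ≥0∞) ^ ((k + 1) / 2))⁻¹ := by
  rcases Set.eq_empty_or_nonempty {x : ℤ_[p] | (p : ℤ_[p]) ^ k ∣ x * (x - (p : ℤ_[p]) ^ l) - z}
    with hempty | ⟨x₀, hx₀⟩
  · simp [hempty]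
  calc _ ≤ padicHaar p ({x | (p : ℤ_[p]) ^ ((k + 1) / 2) ∣ x - x₀}
          ∪ {x | (p : ℤ_[p]) ^ ((k + 1) / 2) ∣ x - ((p : ℤ_[p]) ^ l - x₀)}) :=
        measure_mono (setOf_pow_dvd_mul_sub_sub_subset_union PadicInt.prime_p hx₀)
    _ ≤ _ := measure_union_le _ _
    _ = 2 * ((p : ℝ≥0∞) ^ ((k + 1) / 2))⁻¹ := by
        rw [PadicInt.measure_setOf_pow_dvd_sub, PadicInt.measure_setOf_pow_dvd_sub, two_mul]
end

section
/- Let p be a prime and let k, l, r ≥ 0 be integers. Let μ_p(k;l;r) be the Haar volume of the set of (x₂₁, x₃₁, x₃₂) ∈ ℤ_p³ satisfying: p^k divides x₂₁² − x₂₁·p^l; p^k divides x₂₁(x₃₁ − x₃₂); p^l divides x₃₂² − x₃₂·p^r; and p^{k+l} divides p^l(x₃₁² − x₃₁·p^r) − x₂₁(x₃₂² − x₃₂·p^r). Then μ_p(k;l;r) ≤ 8 · p^{−7k/6} · p^{−l/6}. -/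
/-!
Integrate in the order `x₂₁`, `x₃₂`, `x₃₁`. Since `x₂₁` and `x₂₁ - p^l` differ by `p^l`, the
condition `p^k ∣ x₂₁ (x₂₁ - p^l)` puts `x₂₁` in two balls of radius `p^{-m₁}`,
`m₁ = max(⌈k/2⌉, k - l)`; likewise `x₃₂` lies in two balls of radius `p^{-⌈l/2⌉}`. For fixed
`x₂₁, x₃₂`, the difference of the last condition at two admissible values `y₀, y` of `x₃₁` is
`p^l (y - y₀)(y + y₀ - p^r)`, so `y` lies in two balls of radius `p^{-⌈k/2⌉}`. The volume is thus
at most `8 p^{-(m₁ + ⌈l/2⌉ + ⌈k/2⌉)}`, and `6 m₁ ≥ 4k - 2l` (average `m₁ ≥ k/2` and `m₁ ≥ k - l`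
with weights `2/3, 1/3`) gives the exponent `7k/6 + l/6`.
-/

open MeasureTheory
open scoped ENNReal

open Set

namespace PadicInt

variable {p : ℕ} [Fact p.Prime]

theorem pow_dvd_or_pow_dvd_of_pow_dvd_mul {a b : ℤ_[p]} {k i j : ℕ}
    (h : (p : ℤ_[p]) ^ k ∣ a * b) (hij : i + j ≤ k + 1) :
    (p : ℤ_[p]) ^ i ∣ a ∨ (p : ℤ_[p]) ^ j ∣ b := by
  rcases eq_or_ne a 0 with rfl | ha
  · exact .inl (dvd_zero _)
  rcases eq_or_ne b 0 with rfl | hb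
  · exact .inr (dvd_zero _)
  simp only [← Ideal.mem_span_singleton] at h ⊢
  rw [mem_span_pow_iff_le_valuation _ ha, mem_span_pow_iff_le_valuation _ hb]
  rw [mem_span_pow_iff_le_valuation _ (mul_ne_zero ha hb), valuation_mul ha hb] at h
  omega

theorem pow_dvd_or_pow_dvd_sub_of_pow_dvd_mul_sub {x : ℤ_[p]} {k l : ℕ}
    (h : (p : ℤ_[p]) ^ k ∣ x * (x - (p : ℤ_[p]) ^ l)) :
    (p : ℤ_[p]) ^ max ((k + 1) / 2) (k - l) ∣ x ∨
      (p : ℤ_[p]) ^ max ((k + 1) / 2) (k - l) ∣ x - (p : ℤ_[p]) ^ l := by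
  rcases le_or_gt (k - l) ((k + 1) / 2) with hm | hm
  · rw [max_eq_left hm]
    exact pow_dvd_or_pow_dvd_of_pow_dvd_mul h (by omega)
  rw [max_eq_right hm.le]
  rcases pow_dvd_or_pow_dvd_of_pow_dvd_mul h (i := k - l) (j := l + 1) (by omega) with h₁ | h₁
  · exact .inl h₁
  rcases pow_dvd_or_pow_dvd_of_pow_dvd_mul h (i := l + 1) (j := k - l) (by omega) with h₂ | h₂
  · have := (pow_dvd_pow_iff prime_p.ne_zero prime_p.not_isUnit).1 (by simpa using dvd_sub h₂ h₁)
    omega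
  · exact .inr h₂

theorem pow_dvd_iff_norm_le {x : ℤ_[p]} {n : ℕ} :
    (p : ℤ_[p]) ^ n ∣ x ↔ ‖x‖ ≤ (p : ℝ) ^ (-n : ℤ) := by
  rw [norm_le_pow_iff_mem_span_pow, Ideal.mem_span_singleton]

theorem measurableSet_setOf_pow_dvd_s18 {α : Type*} [TopologicalSpace α] [MeasurableSpace α]
    [OpensMeasurableSpace α] {g : α → ℤ_[p]} (hg : Continuous g) (n : ℕ) :
    MeasurableSet {a | (p : ℤ_[p]) ^ n ∣ g a} := by
  simp only [pow_dvd_iff_norm_le]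
  exact (isClosed_le (continuous_norm.comp hg) continuous_const).measurableSet

theorem pow_mul_measure_setOf_pow_dvd (μ : Measure ℤ_[p]) [μ.IsAddLeftInvariant] (n : ℕ) :
    (p : ℝ≥0∞) ^ n * μ {x | (p : ℤ_[p]) ^ n ∣ x} = μ univ := by
  set H := (toZModPow n : ℤ_[p] →+* ZMod (p ^ n)).toAddMonoidHom.ker
  have hH : (H : Set ℤ_[p]) = {x | (p : ℤ_[p]) ^ n ∣ x} := by
    ext x
    simp [H, ← Ideal.mem_span_singleton, ← ker_toZModPow]
  have hindex : H.index = p ^ n := by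
    rw [AddSubgroup.index_ker, AddMonoidHom.range_eq_top.2 (ZMod.ringHom_surjective _)]
    simp
  have : H.FiniteIndex := ⟨by rw [hindex]; exact pow_ne_zero _ (Fact.out : p.Prime).ne_zero⟩
  have := H.index_mul_measure (by rw [hH]; exact measurableSet_setOf_pow_dvd_s18 continuous_id n) μ
  rwa [hindex, hH, Nat.cast_pow] at this

end PadicInt

section padicHaar

variable {p : ℕ} [Fact p.Prime]

instance : (padicHaar p).IsAddHaarMeasure := by unfold padicHaar; infer_instance

theorem padicHaar_univ : padicHaar p univ = 1 := Measure.addHaarMeasure_self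

theorem padicHaar_setOf_pow_dvd_sub (c : ℤ_[p]) (m : ℕ) :
    padicHaar p {x | (p : ℤ_[p]) ^ m ∣ x - c} = ((p : ℝ≥0∞) ^ m)⁻¹ := by
  have htrans : {x | (p : ℤ_[p]) ^ m ∣ x - c} =
      (fun x => -c + x) ⁻¹' {x | (p : ℤ_[p]) ^ m ∣ x} := by
    ext x
    simp [neg_add_eq_sub]
  rw [htrans, measure_preimage_add]
  refine ENNReal.eq_inv_of_mul_eq_one_left ?_
  rw [mul_comm, PadicInt.pow_mul_measure_setOf_pow_dvd, padicHaar_univ]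

theorem padicHaar_le_of_forall_pow_dvd_sub_or {S : Set ℤ_[p]} {a b : ℤ_[p]} {m : ℕ}
    (hS : ∀ x ∈ S, (p : ℤ_[p]) ^ m ∣ x - a ∨ (p : ℤ_[p]) ^ m ∣ x - b) :
    padicHaar p S ≤ 2 * ((p : ℝ≥0∞) ^ m)⁻¹ :=
  calc padicHaar p S
      ≤ padicHaar p ({x | (p : ℤ_[p]) ^ m ∣ x - a} ∪ {x | (p : ℤ_[p]) ^ m ∣ x - b}) :=
        measure_mono hS
    _ ≤ _ := measure_union_le _ _
    _ = _ := by rw [padicHaar_setOf_pow_dvd_sub, padicHaar_setOf_pow_dvd_sub, two_mul]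

theorem padicHaar_le_of_forall_pow_dvd_mul_sub {S : Set ℤ_[p]} {a b : ℤ_[p]} {k : ℕ}
    (hS : ∀ x ∈ S, (p : ℤ_[p]) ^ k ∣ (x - a) * (x - b)) :
    padicHaar p S ≤ 2 * ((p : ℝ≥0∞) ^ ((k + 1) / 2))⁻¹ :=
  padicHaar_le_of_forall_pow_dvd_sub_or fun x hx =>
    PadicInt.pow_dvd_or_pow_dvd_of_pow_dvd_mul (hS x hx) (by omega)

end padicHaar

namespace MeasureTheory.Measure

variable {α β : Type*} [MeasurableSpace α] [MeasurableSpace β] {μ : Measure α} {ν : Measure β}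

theorem prod_apply_le_of_subset_fst_preimage [SFinite ν] {s : Set (α × β)} (hs : MeasurableSet s)
    {t : Set α} (hst : s ⊆ Prod.fst ⁻¹' t) {c d : ℝ≥0∞} (ht : μ t ≤ d)
    (hsec : ∀ x ∈ t, ν (Prod.mk x ⁻¹' s) ≤ c) : μ.prod ν s ≤ c * d := by
  rw [prod_apply hs]
  refine (lintegral_mono fun x => ?_).trans ((lintegral_indicator_const_le t c).trans (by gcongr))
  by_cases hx : x ∈ t
  · simpa [hx] using hsec x hx
  · have : Prod.mk x ⁻¹' s = ∅ := eq_empty_of_forall_notMem fun y hy => hx (hst hy)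
    simp [this]

theorem prod_apply_le_of_subset_snd_preimage [SFinite μ] [SFinite ν] {s : Set (α × β)}
    (hs : MeasurableSet s) {t : Set β} (hst : s ⊆ Prod.snd ⁻¹' t) {c d : ℝ≥0∞} (ht : ν t ≤ d)
    (hsec : ∀ y ∈ t, μ ((fun x => (x, y)) ⁻¹' s) ≤ c) : μ.prod ν s ≤ c * d := by
  rw [← prod_swap, map_apply measurable_swap hs]
  exact prod_apply_le_of_subset_fst_preimage (measurable_swap hs) (fun _ h => hst h) ht hsec

end MeasureTheory.Measure

theorem ENNReal.prod_two_mul_inv_pow_le_eight_mul_rpow {x : ℝ≥0∞} (hx : 1 ≤ x) (hx' : x ≠ ⊤)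
    {m₁ m₂ m₃ k l : ℕ} (h : 7 * k + l ≤ 6 * (m₁ + m₂ + m₃)) :
    2 * (x ^ m₁)⁻¹ * (2 * (x ^ m₂)⁻¹) * (2 * (x ^ m₃)⁻¹) ≤
      8 * x ^ (-(7 * (k : ℝ)) / 6) * x ^ (-(l : ℝ) / 6) := by
  have hx₀ : x ≠ 0 := (zero_lt_one.trans_le hx).ne'
  have h' : (7 * k + l : ℝ) ≤ 6 * (m₁ + m₂ + m₃) := by exact_mod_cast h
  simp only [← ENNReal.rpow_natCast, ← ENNReal.rpow_neg]
  calc 2 * x ^ (-(m₁ : ℝ)) * (2 * x ^ (-(m₂ : ℝ))) * (2 * x ^ (-(m₃ : ℝ)))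
      = 8 * x ^ (-(m₁ : ℝ) + -m₂ + -m₃) := by
        rw [ENNReal.rpow_add _ _ hx₀ hx', ENNReal.rpow_add _ _ hx₀ hx']; ring
    _ ≤ 8 * x ^ (-(7 * (k : ℝ)) / 6 + -(l : ℝ) / 6) := by
        gcongr 8 * ?_
        exact ENNReal.rpow_le_rpow_of_exponent_le hx (by linarith)
    _ = _ := by rw [ENNReal.rpow_add _ _ hx₀ hx', mul_assoc]

section mulClosedLattice

variable (p : ℕ) [Fact p.Prime] (k l r : ℕ)

def mulClosedLatticeSet : Set (ℤ_[p] × ℤ_[p] × ℤ_[p]) :=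
  {v | (p : ℤ_[p]) ^ k ∣ v.1 ^ 2 - v.1 * (p : ℤ_[p]) ^ l ∧
    (p : ℤ_[p]) ^ k ∣ v.1 * (v.2.1 - v.2.2) ∧
    (p : ℤ_[p]) ^ l ∣ v.2.2 ^ 2 - v.2.2 * (p : ℤ_[p]) ^ r ∧
    (p : ℤ_[p]) ^ (k + l) ∣
      (p : ℤ_[p]) ^ l * (v.2.1 ^ 2 - v.2.1 * (p : ℤ_[p]) ^ r) -
        v.1 * (v.2.2 ^ 2 - v.2.2 * (p : ℤ_[p]) ^ r)}

theorem measurableSet_mulClosedLatticeSet : MeasurableSet (mulClosedLatticeSet p k l r) := by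
  refine .inter ?_ (.inter ?_ (.inter ?_ ?_)) <;>
    exact PadicInt.measurableSet_setOf_pow_dvd_s18 (by fun_prop) _

theorem mulClosedLatticeSet_subset_fst_preimage :
    mulClosedLatticeSet p k l r ⊆
      Prod.fst ⁻¹' {x | (p : ℤ_[p]) ^ k ∣ x * (x - (p : ℤ_[p]) ^ l)} := fun v hv => by
  simpa only [mem_preimage, mem_ofPred_eq, mul_sub, ← sq] using hv.1

theorem mulClosedLatticeSet_section_subset_snd_preimage (x : ℤ_[p]) :
    Prod.mk x ⁻¹' mulClosedLatticeSet p k l r ⊆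
      Prod.snd ⁻¹' {z | (p : ℤ_[p]) ^ l ∣ z * (z - (p : ℤ_[p]) ^ r)} := fun v hv => by
  simpa only [mem_preimage, mem_ofPred_eq, mul_sub, ← sq] using hv.2.2.1

variable {p k l r}

theorem padicHaar_setOf_mem_mulClosedLatticeSet_le (x z : ℤ_[p]) :
    padicHaar p {y | (x, y, z) ∈ mulClosedLatticeSet p k l r} ≤
      2 * ((p : ℝ≥0∞) ^ ((k + 1) / 2))⁻¹ := by
  rcases eq_empty_or_nonempty {y | (x, y, z) ∈ mulClosedLatticeSet p k l r} with he | ⟨y₀, hy₀⟩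
  · simp [he]
  refine padicHaar_le_of_forall_pow_dvd_mul_sub (a := y₀) (b := (p : ℤ_[p]) ^ r - y₀)
    fun y hy => ?_
  -- the last condition at `y` minus the one at `y₀` is `p ^ l (y - y₀) (y + y₀ - p ^ r)`
  have hdiff := dvd_sub hy.2.2.2 hy₀.2.2.2
  rw [pow_add, mul_comm (_ ^ k), show ∀ a b c : ℤ_[p], a - b - (c - b) = a - c from
    fun _ _ _ => by ring, ← mul_sub,
    show y ^ 2 - y * (p : ℤ_[p]) ^ r - (y₀ ^ 2 - y₀ * (p : ℤ_[p]) ^ r) =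
      (y - y₀) * (y - ((p : ℤ_[p]) ^ r - y₀)) by ring] at hdiff
  exact (mul_dvd_mul_iff_left (pow_ne_zero l PadicInt.prime_p.ne_zero)).1 hdiff

end mulClosedLattice

/-- For a prime `p` and `k, l, r ≥ 0`, the Haar volume `μ_p(k;l;r)` of the set of
`(x₂₁, x₃₁, x₃₂) ∈ ℤ_p³` satisfying
`p^k ∣ x₂₁² - x₂₁ p^l`, `p^k ∣ x₂₁(x₃₁ - x₃₂)`, `p^l ∣ x₃₂² - x₃₂ p^r`, and
`p^{k+l} ∣ p^l (x₃₁² - x₃₁ p^r) - x₂₁ (x₃₂² - x₃₂ p^r)`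
is at most `8 · p^{-7k/6} · p^{-l/6}`. -/
theorem stmt18 (p : ℕ) [Fact p.Prime] (k l r : ℕ) :
    ((padicHaar p).prod ((padicHaar p).prod (padicHaar p)))
      {v : ℤ_[p] × ℤ_[p] × ℤ_[p] |
        (p : ℤ_[p]) ^ k ∣ v.1 ^ 2 - v.1 * (p : ℤ_[p]) ^ l ∧
        (p : ℤ_[p]) ^ k ∣ v.1 * (v.2.1 - v.2.2) ∧
        (p : ℤ_[p]) ^ l ∣ v.2.2 ^ 2 - v.2.2 * (p : ℤ_[p]) ^ r ∧
        (p : ℤ_[p]) ^ (k + l) ∣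
          (p : ℤ_[p]) ^ l * (v.2.1 ^ 2 - v.2.1 * (p : ℤ_[p]) ^ r) -
            v.1 * (v.2.2 ^ 2 - v.2.2 * (p : ℤ_[p]) ^ r)}
      ≤ 8 * (p : ℝ≥0∞) ^ (-(7 * (k : ℝ)) / 6) * (p : ℝ≥0∞) ^ (-(l : ℝ) / 6) := by
  have hS := measurableSet_mulClosedLatticeSet p k l r
  have hx_bound : padicHaar p {x | (p : ℤ_[p]) ^ k ∣ x * (x - (p : ℤ_[p]) ^ l)} ≤
      2 * ((p : ℝ≥0∞) ^ max ((k + 1) / 2) (k - l))⁻¹ :=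
    padicHaar_le_of_forall_pow_dvd_sub_or (a := 0) fun _ hx => by
      simpa only [sub_zero] using PadicInt.pow_dvd_or_pow_dvd_sub_of_pow_dvd_mul_sub hx
  have hz_bound : padicHaar p {z | (p : ℤ_[p]) ^ l ∣ z * (z - (p : ℤ_[p]) ^ r)} ≤
      2 * ((p : ℝ≥0∞) ^ ((l + 1) / 2))⁻¹ :=
    padicHaar_le_of_forall_pow_dvd_mul_sub (a := 0) (b := (p : ℤ_[p]) ^ r) fun _ hz => by
      rwa [sub_zero]
  calc ((padicHaar p).prod ((padicHaar p).prod (padicHaar p))) (mulClosedLatticeSet p k l r)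
      ≤ 2 * ((p : ℝ≥0∞) ^ ((k + 1) / 2))⁻¹ * (2 * ((p : ℝ≥0∞) ^ ((l + 1) / 2))⁻¹) *
          (2 * ((p : ℝ≥0∞) ^ max ((k + 1) / 2) (k - l))⁻¹) :=
        Measure.prod_apply_le_of_subset_fst_preimage hS
          (mulClosedLatticeSet_subset_fst_preimage p k l r) hx_bound fun x _ =>
        Measure.prod_apply_le_of_subset_snd_preimage (hS.preimage measurable_prodMk_left)
          (mulClosedLatticeSet_section_subset_snd_preimage p k l r x) hz_bound fun z _ =>
        padicHaar_setOf_mem_mulClosedLatticeSet_le x z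
    _ ≤ _ := ENNReal.prod_two_mul_inv_pow_le_eight_mul_rpow
        (by exact_mod_cast (Fact.out : p.Prime).one_lt.le)
        (ENNReal.natCast_ne_top p) (by omega)
end
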